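/- arXiv:2211.10389 — 4 statements merged into one kernel-verified Lean document; each statement's English description precedes it below -/
import Mathlib

section
/- For any two excitation multiindices μ = (a^{(μ)}_1,…,a^{(μ)}_{r}; i^{(μ)}_1,…,i^{(μ)}_{r}) and ν = (a^{(ν)}_1,…,a^{(ν)}_{s}; i^{(ν)}_1,…,i^{(ν)}_{s}) such that the virtual index sets are disjoint ({a^{(μ)}_1,…,a^{(μ)}_r} ∩ {a^{(ν)}_1,…,a^{(ν)}_s} = ∅) and the occupied index sets are disjoint ({i^{(μ)}_1,…,i^{(μ)}_r} ∩ {i^{(ν)}_1,…,i^{(ν)}_s} = ∅), the excitation operator X_μ commutes with the adjoint of X_ν, i.e. X_μ ∘ X_ν† − X_ν† ∘ X_μ = 0 as linear maps on the Fock space F. -/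
set_option synthInstance.maxHeartbeats 1000000
set_option maxHeartbeats 1000000

namespace CC

abbrev FockSpace (K : ℕ) := (Fin K → Bool) → ℝ

noncomputable def eVec (K : ℕ) (k : Fin K → Bool) : FockSpace K := Pi.single k 1

def nTrue (K : ℕ) (k : Fin K → Bool) : ℕ :=
  (Finset.univ.filter fun j => k j = true).card

def sgn (K : ℕ) (i : Fin K) (k : Fin K → Bool) : ℝ :=
  (-1 : ℝ) ^ (Finset.univ.filter fun j => j < i ∧ k j = true).card

noncomputable def creOp (K : ℕ) (i : Fin K) : Module.End ℝ (FockSpace K) where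
  toFun f := fun m =>
    if m i = true then
      sgn K i (Function.update m i false) * f (Function.update m i false)
    else 0
  map_add' f g := by
    funext m
    by_cases h : m i = true <;> simp [h, mul_add]
  map_smul' c f := by
    funext m
    by_cases h : m i = true <;> simp [h] <;> ring

noncomputable def annOp (K : ℕ) (i : Fin K) : Module.End ℝ (FockSpace K) where
  toFun f := fun m =>
    if m i = true then 0
    else sgn K i m * f (Function.update m i true)
  map_add' f g := by
    funext m
    by_cases h : m i = true <;> simp [h, mul_add]
  map_smul' c f := by
    funext m
    by_cases h : m i = true <;> simp [h] <;> ring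

structure ExIdx (K N : ℕ) where
  r : ℕ
  r_pos : 1 ≤ r
  r_le : r ≤ N
  occ : Fin r → Fin K
  vir : Fin r → Fin K
  occ_mono : StrictMono occ
  vir_mono : StrictMono vir
  occ_lt : ∀ j, ((occ j : Fin K) : ℕ) < N
  vir_ge : ∀ j, N ≤ ((vir j : Fin K) : ℕ)

noncomputable def excOp (K N : ℕ) (μ : ExIdx K N) : Module.End ℝ (FockSpace K) :=
  (List.ofFn fun j => creOp K (μ.vir j)).prod *
    ((List.ofFn fun j => annOp K (μ.occ j)).reverse).prod

noncomputable def dexcOp (K N : ℕ) (μ : ExIdx K N) : Module.End ℝ (FockSpace K) :=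
  (List.ofFn fun j => creOp K (μ.occ j)).prod *
    ((List.ofFn fun j => annOp K (μ.vir j)).reverse).prod

noncomputable def Hspace (K N : ℕ) : Submodule ℝ (FockSpace K) :=
  Submodule.span ℝ {f | ∃ k : Fin K → Bool, nTrue K k = N ∧ f = eVec K k}

def refOcc (K N : ℕ) : Fin K → Bool := fun j => decide ((j : ℕ) < N)

noncomputable def refVec (K N : ℕ) : FockSpace K := eVec K (refOcc K N)

abbrev ExcInvariant (K N : ℕ) : Prop :=
  ∀ μ : ExIdx K N, ∀ x ∈ Hspace K N, excOp K N μ x ∈ Hspace K N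

noncomputable def excResL (K N : ℕ) (hX : ExcInvariant K N) (μ : ExIdx K N) :
    Hspace K N →L[ℝ] Hspace K N :=
  LinearMap.toContinuousLinearMap ((excOp K N μ).restrict (hX μ))

noncomputable def clusterSpace (K N : ℕ) (hX : ExcInvariant K N) :
    Submodule ℝ (Hspace K N →L[ℝ] Hspace K N) :=
  Submodule.span ℝ (Set.range (excResL K N hX))

noncomputable def Gset (K N : ℕ) (hX : ExcInvariant K N) :
    Set (Hspace K N →L[ℝ] Hspace K N) :=
  {G | ∃ C ∈ clusterSpace K N hX, G = 1 + C}

noncomputable def ip (K : ℕ) (f g : FockSpace K) : ℝ :=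
  ∑ k : Fin K → Bool, f k * g k

lemma nTrue_refOcc (K N : ℕ) (h : N ≤ K) : nTrue K (refOcc K N) = N := by
  unfold nTrue refOcc
  have : (Finset.univ.filter fun j : Fin K => decide ((j : ℕ) < N) = true)
      = Finset.map (Fin.castLEEmb h) Finset.univ := by
    ext j
    simp only [Finset.mem_filter, Finset.mem_univ, true_and, decide_eq_true_eq,
      Finset.mem_map, Fin.castLEEmb_apply]
    constructor
    · intro hj
      exact ⟨⟨(j : ℕ), hj⟩, by ext; simp⟩
    · rintro ⟨i, -, rfl⟩
      simpa using i.isLt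
  rw [this]
  simp

lemma refVec_mem (K N : ℕ) (h : N ≤ K) : refVec K N ∈ Hspace K N :=
  Submodule.subset_span ⟨refOcc K N, nTrue_refOcc K N h, rfl⟩

noncomputable def refState (K N : ℕ) (h : N ≤ K) : Hspace K N :=
  ⟨refVec K N, refVec_mem K N h⟩

noncomputable instance instTopRingCLM (K N : ℕ) :
    IsTopologicalRing (Hspace K N →L[ℝ] Hspace K N) := by
  exact @NonUnitalSeminormedRing.toIsTopologicalRing (Hspace K N →L[ℝ] Hspace K N) _

noncomputable def expE (K N : ℕ) (T : Hspace K N →L[ℝ] Hspace K N) :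
    Hspace K N →L[ℝ] Hspace K N :=
  haveI : ContinuousAdd (Hspace K N →L[ℝ] Hspace K N) :=
    (inferInstance : IsTopologicalAddGroup (Hspace K N →L[ℝ] Hspace K N)).toContinuousAdd
  (NormedSpace.expSeries ℝ (Hspace K N →L[ℝ] Hspace K N)).sum T


lemma sgn_update_self (K : ℕ) (i : Fin K) (m : Fin K → Bool) (b : Bool) :
    sgn K i (Function.update m i b) = sgn K i m := by
  unfold sgn
  congr 1
  apply congrArg
  apply Finset.filter_congr
  intro j _
  by_cases h : j < i
  · simp [h, Function.update_of_ne (ne_of_lt h)]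
  · simp [h]

lemma sgn_update_ne (K : ℕ) (i j : Fin K) (m : Fin K → Bool) (b : Bool)
    (hij : i ≠ j) (hb : m i ≠ b) :
    sgn K j (Function.update m i b) = (if i < j then -1 else 1) * sgn K j m := by
  by_cases hlt : i < j
  · simp only [hlt, if_true]
    set S := Finset.univ.filter fun l : Fin K => l < j ∧ m l = true with hS
    cases b with
    | true =>
      have hmi : m i = false := by
        cases h : m i
        · rfl
        · exact absurd h hb
      have hfil : (Finset.univ.filter fun l : Fin K => l < j ∧ Function.update m i true l = true)
          = insert i S := by
        ext l
        rcases eq_or_ne l i with rfl | h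
        · simp [hlt]
        · simp [Function.update_of_ne h, h, hS]
      have hnotmem : i ∉ S := by simp [hS, hmi]
      unfold sgn
      rw [hfil, Finset.card_insert_of_notMem hnotmem, pow_succ]
      ring
    | false =>
      have hmi : m i = true := by
        cases h : m i
        · exact absurd h hb
        · rfl
      have hfil : (Finset.univ.filter fun l : Fin K => l < j ∧ Function.update m i false l = true)
          = S.erase i := by
        ext l
        rcases eq_or_ne l i with rfl | h
        · simp [hlt]
        · simp [Function.update_of_ne h, h, hS]
      have hmem : i ∈ S := by simp [hS, hmi, hlt]
      unfold sgn
      rw [hfil]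
      have := Finset.card_erase_add_one hmem
      rw [← this, pow_succ]
      ring
  · simp only [hlt, if_false, one_mul]
    unfold sgn
    congr 1
    apply congrArg
    apply Finset.filter_congr
    intro l _
    by_cases h : l < j
    · have : l ≠ i := by
        intro rfl'
        subst rfl'
        rcases hij.lt_or_gt with h1 | h1
        · exact hlt h1
        · exact absurd h (not_lt.mpr h1.le)
      simp [h, Function.update_of_ne this]
    · simp [h]

noncomputable def genOp (K : ℕ) (b : Bool) (i : Fin K) : Module.End ℝ (FockSpace K) where
  toFun f := fun m =>
    if m i = b then sgn K i m * f (Function.update m i (!b)) else 0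
  map_add' f g := by
    funext m
    by_cases h : m i = b <;> simp [h, mul_add]
  map_smul' c f := by
    funext m
    by_cases h : m i = b <;> simp [h] <;> ring

lemma genOp_apply (K : ℕ) (b : Bool) (i : Fin K) (f : FockSpace K) (m : Fin K → Bool) :
    genOp K b i f m = if m i = b then sgn K i m * f (Function.update m i (!b)) else 0 := rfl

lemma genOp_anticomm (K : ℕ) (b c : Bool) (i j : Fin K) (h : i ≠ j) :
    genOp K b i * genOp K c j = -(genOp K c j * genOp K b i) := by
  apply LinearMap.ext
  intro f
  funext m
  simp only [Module.End.mul_apply, LinearMap.neg_apply, Pi.neg_apply, genOp_apply]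
  by_cases hi : m i = b <;> by_cases hj : m j = c
  · have hji : j ≠ i := h.symm
    rw [Function.update_of_ne hji, Function.update_of_ne h, if_pos hi, if_pos hj,
      if_pos hi, if_pos hj]
    have hbi : m i ≠ !b := by simp [hi]
    have hcj : m j ≠ !c := by simp [hj]
    rw [sgn_update_ne K i j m (!b) h hbi, sgn_update_ne K j i m (!c) hji hcj,
      Function.update_comm h]
    rcases h.lt_or_gt with hlt | hlt
    · rw [if_pos hlt, if_neg (not_lt.mpr hlt.le)]
      ring
    · rw [if_neg (not_lt.mpr hlt.le), if_pos hlt]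
      ring
  · simp [Function.update_of_ne h, Function.update_of_ne h.symm, hi, hj]
  · simp [Function.update_of_ne h, Function.update_of_ne h.symm, hi, hj]
  · simp [Function.update_of_ne h, Function.update_of_ne h.symm, hi, hj]


lemma creOp_eq_genOp (K : ℕ) (i : Fin K) : creOp K i = genOp K true i := by
  apply LinearMap.ext
  intro f
  funext m
  show (if m i = true then sgn K i (Function.update m i false) * f (Function.update m i false) else 0)
      = genOp K true i f m
  rw [genOp_apply, sgn_update_self]
  rfl

lemma annOp_eq_genOp (K : ℕ) (i : Fin K) : annOp K i = genOp K false i := by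
  apply LinearMap.ext
  intro f
  funext m
  show (if m i = true then 0 else sgn K i m * f (Function.update m i true))
      = genOp K false i f m
  rw [genOp_apply]
  cases h : m i <;> simp [h]

lemma mul_list_prod_anticomm {R : Type*} [Ring R] (c : R) (L : List R)
    (h : ∀ x ∈ L, c * x = -(x * c)) :
    c * L.prod = (-1) ^ L.length * (L.prod * c) := by
  induction L with
  | nil => simp
  | cons x L ih =>
    simp only [List.prod_cons, List.length_cons]
    rw [← mul_assoc, h x (List.mem_cons_self), neg_mul, mul_assoc,
      ih (fun y hy => h y (List.mem_cons_of_mem x hy)), ← mul_assoc,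
      ← ((Commute.neg_one_left x).pow_left L.length).eq]
    simp only [mul_assoc, pow_succ, neg_one_mul, mul_neg, mul_one, neg_mul]

/-- the list of elementary operators for an excitation operator -/
noncomputable def excList (K N : ℕ) (μ : ExIdx K N) : List (Module.End ℝ (FockSpace K)) :=
  (List.ofFn fun j => creOp K (μ.vir j)) ++ ((List.ofFn fun j => annOp K (μ.occ j)).reverse)

noncomputable def dexcList (K N : ℕ) (μ : ExIdx K N) : List (Module.End ℝ (FockSpace K)) :=
  (List.ofFn fun j => creOp K (μ.occ j)) ++ ((List.ofFn fun j => annOp K (μ.vir j)).reverse)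

lemma excOp_eq (K N : ℕ) (μ : ExIdx K N) : excOp K N μ = (excList K N μ).prod := by
  rw [excList, List.prod_append]; rfl

lemma dexcOp_eq (K N : ℕ) (μ : ExIdx K N) : dexcOp K N μ = (dexcList K N μ).prod := by
  rw [dexcList, List.prod_append]; rfl

lemma mem_excList (K N : ℕ) (μ : ExIdx K N) (x : Module.End ℝ (FockSpace K))
    (hx : x ∈ excList K N μ) :
    ∃ (b : Bool) (i : Fin K), x = genOp K b i ∧
      (i ∈ Set.range μ.vir ∪ Set.range μ.occ) := by
  rw [excList, List.mem_append, List.mem_reverse, List.mem_ofFn, List.mem_ofFn] at hx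
  rcases hx with ⟨j, rfl⟩ | ⟨j, rfl⟩
  · exact ⟨true, μ.vir j, creOp_eq_genOp K _, Or.inl ⟨j, rfl⟩⟩
  · exact ⟨false, μ.occ j, annOp_eq_genOp K _, Or.inr ⟨j, rfl⟩⟩

lemma mem_dexcList (K N : ℕ) (μ : ExIdx K N) (x : Module.End ℝ (FockSpace K))
    (hx : x ∈ dexcList K N μ) :
    ∃ (b : Bool) (i : Fin K), x = genOp K b i ∧
      (i ∈ Set.range μ.vir ∪ Set.range μ.occ) := by
  rw [dexcList, List.mem_append, List.mem_reverse, List.mem_ofFn, List.mem_ofFn] at hx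
  rcases hx with ⟨j, rfl⟩ | ⟨j, rfl⟩
  · exact ⟨true, μ.occ j, creOp_eq_genOp K _, Or.inr ⟨j, rfl⟩⟩
  · exact ⟨false, μ.vir j, annOp_eq_genOp K _, Or.inl ⟨j, rfl⟩⟩

lemma dexcList_length_even (K N : ℕ) (μ : ExIdx K N) : Even (dexcList K N μ).length := by
  rw [dexcList, List.length_append, List.length_reverse, List.length_ofFn, List.length_ofFn]
  exact ⟨μ.r, rfl⟩

/-- excitation operators with disjoint virtual and occupied index sets
commute with the adjoint (de-excitation) operator. -/
theorem excitation_commutes_with_deexcitation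
    (K N : ℕ) (hN : 0 < N) (hK : N < K) (μ ν : ExIdx K N)
    (hvir : Disjoint (Set.range μ.vir) (Set.range ν.vir))
    (hocc : Disjoint (Set.range μ.occ) (Set.range ν.occ)) :
    excOp K N μ * dexcOp K N ν - dexcOp K N ν * excOp K N μ = 0 := by
  have hdisj : ∀ i ∈ Set.range μ.vir ∪ Set.range μ.occ,
      ∀ j ∈ Set.range ν.vir ∪ Set.range ν.occ, i ≠ j := by
    rintro i (⟨p, rfl⟩ | ⟨p, rfl⟩) j (⟨q, rfl⟩ | ⟨q, rfl⟩)
    · intro hh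
      exact Set.disjoint_left.mp hvir ⟨p, rfl⟩ ⟨q, hh.symm⟩
    · intro hh
      exact absurd (hh ▸ μ.vir_ge p) (not_le.mpr (ν.occ_lt q))
    · intro hh
      exact absurd (hh ▸ ν.vir_ge q) (not_le.mpr (μ.occ_lt p))
    · intro hh
      exact Set.disjoint_left.mp hocc ⟨p, rfl⟩ ⟨q, hh.symm⟩
  have key : ∀ x ∈ excList K N μ, Commute (dexcList K N ν).prod x := by
    intro x hx
    obtain ⟨b, i, rfl, hi⟩ := mem_excList K N μ x hx
    have hanti : ∀ y ∈ dexcList K N ν, genOp K b i * y = -(y * genOp K b i) := by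
      intro y hy
      obtain ⟨c, j, rfl, hj⟩ := mem_dexcList K N ν y hy
      exact genOp_anticomm K b c i j (hdisj i hi j hj)
    have := mul_list_prod_anticomm (genOp K b i) (dexcList K N ν) hanti
    have h1 : ((-1 : Module.End ℝ (FockSpace K))) ^ (dexcList K N ν).length = 1 := by
      obtain ⟨t, ht⟩ := dexcList_length_even K N ν
      have h2 : ((-1 : Module.End ℝ (FockSpace K))) ^ 2 = 1 := by
        rw [sq]
        apply LinearMap.ext
        intro f
        simp [Module.End.mul_apply]
      rw [ht, ← two_mul, pow_mul, h2, one_pow]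
    rw [h1, one_mul] at this
    exact (Commute.symm this)
  have hcomm : Commute (dexcList K N ν).prod (excList K N μ).prod :=
    Commute.list_prod_right _ _ key
  rw [excOp_eq, dexcOp_eq, sub_eq_zero]
  exact hcomm.symm


end CC
end

section
/- No point of 𝒮₅ is an extreme point of the convex hull of 𝒮₁ ∪ 𝒮₂ ∪ 𝒮₃ ∪ 𝒮₄ ∪ 𝒮₅ ∪ 𝒮₆ ∪ 𝒮₇: every vertex e_i + e_j + e_k with i, j, k ∈ N_s pairwise distinct fails to be an extreme point of conv(𝒮₁ ∪ ⋯ ∪ 𝒮₇). -/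
namespace CCPoly

/-- The `i`-th standard basis vector of `ℝⁿ`. -/
noncomputable def ee (n : ℕ) (i : Fin n) : Fin n → ℝ := Pi.single i 1

/-- 𝒮₁ = {eᵢ : i ∈ N_s}. -/
def S1 (ns nd : ℕ) : Set (Fin (ns + nd) → ℝ) :=
  {x | ∃ i : Fin (ns + nd), (i : ℕ) < ns ∧ x = ee (ns + nd) i}

/-- 𝒮₂ = {eᵢ : i ∈ N_d}. -/
def S2 (ns nd : ℕ) : Set (Fin (ns + nd) → ℝ) :=
  {x | ∃ i : Fin (ns + nd), ns ≤ (i : ℕ) ∧ x = ee (ns + nd) i}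

/-- 𝒮₃ = {eᵢ + eⱼ : i ≠ j ∈ N_s}. -/
def S3 (ns nd : ℕ) : Set (Fin (ns + nd) → ℝ) :=
  {x | ∃ i j : Fin (ns + nd), i ≠ j ∧ (i : ℕ) < ns ∧ (j : ℕ) < ns ∧
        x = ee (ns + nd) i + ee (ns + nd) j}

/-- 𝒮₄ = {eᵢ + eⱼ : i ∈ N_s, j ∈ N_d}. -/
def S4 (ns nd : ℕ) : Set (Fin (ns + nd) → ℝ) :=
  {x | ∃ i j : Fin (ns + nd), (i : ℕ) < ns ∧ ns ≤ (j : ℕ) ∧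
        x = ee (ns + nd) i + ee (ns + nd) j}

/-- 𝒮₅ = {eᵢ + eⱼ + eₖ : i, j, k ∈ N_s pairwise distinct}. -/
def S5 (ns nd : ℕ) : Set (Fin (ns + nd) → ℝ) :=
  {x | ∃ i j k : Fin (ns + nd), i ≠ j ∧ i ≠ k ∧ j ≠ k ∧
        (i : ℕ) < ns ∧ (j : ℕ) < ns ∧ (k : ℕ) < ns ∧
        x = ee (ns + nd) i + ee (ns + nd) j + ee (ns + nd) k}

/-- 𝒮₆ = {2eᵢ : i ∈ N_s}. -/
def S6 (ns nd : ℕ) : Set (Fin (ns + nd) → ℝ) :=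
  {x | ∃ i : Fin (ns + nd), (i : ℕ) < ns ∧ x = (2 : ℝ) • ee (ns + nd) i}

/-- 𝒮₇ = {2eᵢ + eⱼ : i ≠ j ∈ N_s}. -/
def S7 (ns nd : ℕ) : Set (Fin (ns + nd) → ℝ) :=
  {x | ∃ i j : Fin (ns + nd), i ≠ j ∧ (i : ℕ) < ns ∧ (j : ℕ) < ns ∧
        x = (2 : ℝ) • ee (ns + nd) i + ee (ns + nd) j}

/-- 𝒟₁ = {eᵢ : i ∈ N_d}. -/
def D1 (ns nd : ℕ) : Set (Fin (ns + nd) → ℝ) :=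
  {x | ∃ i : Fin (ns + nd), ns ≤ (i : ℕ) ∧ x = ee (ns + nd) i}

/-- 𝒟₂ = {eᵢ + eⱼ : i ≠ j ∈ N_d}. -/
def D2 (ns nd : ℕ) : Set (Fin (ns + nd) → ℝ) :=
  {x | ∃ i j : Fin (ns + nd), i ≠ j ∧ ns ≤ (i : ℕ) ∧ ns ≤ (j : ℕ) ∧
        x = ee (ns + nd) i + ee (ns + nd) j}

/-- 𝒟₃ = {2eᵢ : i ∈ N_d}. -/
def D3 (ns nd : ℕ) : Set (Fin (ns + nd) → ℝ) :=
  {x | ∃ i : Fin (ns + nd), ns ≤ (i : ℕ) ∧ x = (2 : ℝ) • ee (ns + nd) i}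

/-- 𝒟₄ = {eᵢ : i ∈ N_s}. -/
def D4 (ns nd : ℕ) : Set (Fin (ns + nd) → ℝ) :=
  {x | ∃ i : Fin (ns + nd), (i : ℕ) < ns ∧ x = ee (ns + nd) i}

/-- 𝒟₅ = {eᵢ + eⱼ : i ≠ j ∈ N_s}. -/
def D5 (ns nd : ℕ) : Set (Fin (ns + nd) → ℝ) :=
  {x | ∃ i j : Fin (ns + nd), i ≠ j ∧ (i : ℕ) < ns ∧ (j : ℕ) < ns ∧
        x = ee (ns + nd) i + ee (ns + nd) j}

/-- 𝒟₆ = {eᵢ + eⱼ : i ∈ N_s, j ∈ N_d}. -/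
def D6 (ns nd : ℕ) : Set (Fin (ns + nd) → ℝ) :=
  {x | ∃ i j : Fin (ns + nd), (i : ℕ) < ns ∧ ns ≤ (j : ℕ) ∧
        x = ee (ns + nd) i + ee (ns + nd) j}

/-- 𝒟₇ = {eᵢ + eⱼ + eₖ : i ≠ j ∈ N_s, k ∈ N_d}. -/
def D7 (ns nd : ℕ) : Set (Fin (ns + nd) → ℝ) :=
  {x | ∃ i j k : Fin (ns + nd), i ≠ j ∧ (i : ℕ) < ns ∧ (j : ℕ) < ns ∧ ns ≤ (k : ℕ) ∧
        x = ee (ns + nd) i + ee (ns + nd) j + ee (ns + nd) k}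

/-- 𝒟₈ = {eᵢ + eⱼ + eₖ : i, j, k ∈ N_s pairwise distinct}. -/
def D8 (ns nd : ℕ) : Set (Fin (ns + nd) → ℝ) :=
  {x | ∃ i j k : Fin (ns + nd), i ≠ j ∧ i ≠ k ∧ j ≠ k ∧
        (i : ℕ) < ns ∧ (j : ℕ) < ns ∧ (k : ℕ) < ns ∧
        x = ee (ns + nd) i + ee (ns + nd) j + ee (ns + nd) k}

/-- 𝒟₉ = {eᵢ + eⱼ + eₖ + eₗ : i, j, k, l ∈ N_s pairwise distinct}. -/
def D9 (ns nd : ℕ) : Set (Fin (ns + nd) → ℝ) :=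
  {x | ∃ i j k l : Fin (ns + nd), i ≠ j ∧ i ≠ k ∧ i ≠ l ∧ j ≠ k ∧ j ≠ l ∧ k ≠ l ∧
        (i : ℕ) < ns ∧ (j : ℕ) < ns ∧ (k : ℕ) < ns ∧ (l : ℕ) < ns ∧
        x = ee (ns + nd) i + ee (ns + nd) j + ee (ns + nd) k + ee (ns + nd) l}

/-- 𝒟₁₀ = {2eᵢ : i ∈ N_s}. -/
def D10 (ns nd : ℕ) : Set (Fin (ns + nd) → ℝ) :=
  {x | ∃ i : Fin (ns + nd), (i : ℕ) < ns ∧ x = (2 : ℝ) • ee (ns + nd) i}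

/-- 𝒟₁₁ = {2eᵢ + eⱼ : i ∈ N_s, j ∈ N_d}. -/
def D11 (ns nd : ℕ) : Set (Fin (ns + nd) → ℝ) :=
  {x | ∃ i j : Fin (ns + nd), (i : ℕ) < ns ∧ ns ≤ (j : ℕ) ∧
        x = (2 : ℝ) • ee (ns + nd) i + ee (ns + nd) j}

/-- 𝒟₁₂ = {2eᵢ + 2eⱼ : i ≠ j ∈ N_s}. -/
def D12 (ns nd : ℕ) : Set (Fin (ns + nd) → ℝ) :=
  {x | ∃ i j : Fin (ns + nd), i ≠ j ∧ (i : ℕ) < ns ∧ (j : ℕ) < ns ∧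
        x = (2 : ℝ) • ee (ns + nd) i + (2 : ℝ) • ee (ns + nd) j}

/-- no point of 𝒮₅ is an extreme point of
conv(𝒮₁ ∪ 𝒮₂ ∪ 𝒮₃ ∪ 𝒮₄ ∪ 𝒮₅ ∪ 𝒮₆ ∪ 𝒮₇). -/
theorem S5_not_extreme (ns nd : ℕ) (hns : 0 < ns) (hnd : 0 < nd) :
    ∀ x ∈ S5 ns nd,
      x ∉ Set.extremePoints ℝ (convexHull ℝ
        (S1 ns nd ∪ S2 ns nd ∪ S3 ns nd ∪ S4 ns nd ∪ S5 ns nd ∪ S6 ns nd ∪ S7 ns nd)) := by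
  rintro x ⟨i, j, k, hij, hik, hjk, hi, hj, hk, rfl⟩ hext
  set S := S1 ns nd ∪ S2 ns nd ∪ S3 ns nd ∪ S4 ns nd ∪ S5 ns nd ∪ S6 ns nd ∪ S7 ns nd
  have ha : (2 : ℝ) • ee (ns + nd) i + ee (ns + nd) k ∈ S := by
    refine Or.inr ⟨i, k, hik, hi, hk, rfl⟩
  have hb : (2 : ℝ) • ee (ns + nd) j + ee (ns + nd) k ∈ S := by
    refine Or.inr ⟨j, k, hjk, hj, hk, rfl⟩
  have hmem : ∀ y ∈ S, y ∈ convexHull ℝ S := fun y hy => subset_convexHull ℝ S hy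
  have hseg : ee (ns + nd) i + ee (ns + nd) j + ee (ns + nd) k ∈
      openSegment ℝ ((2 : ℝ) • ee (ns + nd) i + ee (ns + nd) k)
        ((2 : ℝ) • ee (ns + nd) j + ee (ns + nd) k) := by
    refine ⟨1/2, 1/2, by norm_num, by norm_num, by norm_num, ?_⟩
    module
  obtain h1 := hext.2 (hmem _ ha) (hmem _ hb) hseg
  have hj' : ((2 : ℝ) • ee (ns + nd) i + ee (ns + nd) k) j =
      (ee (ns + nd) i + ee (ns + nd) j + ee (ns + nd) k) j := by rw [h1]
  simp [ee, Pi.single_apply, hij.symm, hjk] at hj'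


end CCPoly
end

section
/- Every point of {0} ∪ 𝒮₂ ∪ 𝒮₄ ∪ 𝒮₆ ∪ 𝒮₇ is an extreme point of the convex hull of {0} ∪ 𝒮₁ ∪ 𝒮₂ ∪ 𝒮₃ ∪ 𝒮₄ ∪ 𝒮₅ ∪ 𝒮₆ ∪ 𝒮₇. -/
/-!
Each listed point `x` is exposed: a linear functional `y ↦ w ⬝ᵥ y` takes a strictly smaller
value at every other generator of the hull than at `x`. The weights are `-1` off the support of
`x` and positive on it; since every generator is a sum of at most three basis vectors, with at
most one double index and a coefficient `2` only at a single index, a short check of the finitely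
many index patterns confirms that `x` is the unique maximiser.
-/

theorem mem_extremePoints_convexHull_of_forall_lt {𝕜 E : Type*} [Field 𝕜] [LinearOrder 𝕜]
    [IsStrictOrderedRing 𝕜] [AddCommGroup E] [Module 𝕜 E] {A : Set E} {x : E}
    (f : Module.Dual 𝕜 E) (hx : x ∈ A) (hf : ∀ y ∈ A, y ≠ x → f y < f x) :
    x ∈ (convexHull 𝕜 A).extremePoints 𝕜 := by
  -- `C`, an open half-space plus the boundary point `x`, is convex, contains `A`, and has `x` as an
  -- extreme point.
  set C := {y | f y < f x ∨ y = x}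
  have hC : Convex 𝕜 C := by
    refine convex_iff_forall_pos.2 fun y hy z hz a b ha hb hab ↦ ?_
    have hfx : f x = a * f x + b * f x := by rw [← add_mul, hab, one_mul]
    rcases hy with hy | rfl <;> rcases hz with hz | rfl
    · left; simp only [map_add, map_smul, smul_eq_mul]; nlinarith
    · left; simp only [map_add, map_smul, smul_eq_mul]; nlinarith
    · left; simp only [map_add, map_smul, smul_eq_mul]; nlinarith
    · exact .inr (Convex.combo_self hab _)
  have hxC : x ∈ C.extremePoints 𝕜 := by
    have hCx : C \ {x} = {y | f y < f x} := by
      ext y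
      simp only [C, Set.mem_sdiff, Set.mem_ofPred_eq, Set.mem_singleton_iff]
      grind
    refine hC.mem_extremePoints_iff_convex_sdiff.2 ⟨.inr rfl, ?_⟩
    rw [hCx]
    exact convex_halfSpace_lt f.isLinear _
  have hAC : convexHull 𝕜 A ⊆ C :=
    convexHull_min (fun y hy ↦ (eq_or_ne y x).elim .inr fun h ↦ .inl (hf y hy h)) hC
  exact inter_extremePoints_subset_extremePoints_of_subset hAC ⟨subset_convexHull 𝕜 A hx, hxC⟩

namespace CCPoly

open Matrix

theorem dotProduct_ee {n : ℕ} (w : Fin n → ℝ) (i : Fin n) : w ⬝ᵥ ee n i = w i := by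
  simp [ee, dotProduct_single]

def singlesGenerators (ns nd : ℕ) : Set (Fin (ns + nd) → ℝ) :=
  {0} ∪ S1 ns nd ∪ S2 ns nd ∪ S3 ns nd ∪ S4 ns nd ∪ S5 ns nd ∪ S6 ns nd ∪ S7 ns nd

section

variable {ns nd : ℕ}

local notation "e" => ee (ns + nd)

theorem forall_mem_singlesGenerators {P : (Fin (ns + nd) → ℝ) → Prop} (h₀ : P 0)
    (h₁ : ∀ i : Fin (ns + nd), i < ns → P (e i))
    (h₂ : ∀ j : Fin (ns + nd), ns ≤ j → P (e j))
    (h₃ : ∀ i j : Fin (ns + nd), i ≠ j → i < ns → j < ns → P (e i + e j))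
    (h₄ : ∀ i j : Fin (ns + nd), i < ns → ns ≤ j → P (e i + e j))
    (h₅ : ∀ i j k : Fin (ns + nd), i ≠ j → i ≠ k → j ≠ k → i < ns → j < ns → k < ns →
      P (e i + e j + e k))
    (h₆ : ∀ i : Fin (ns + nd), i < ns → P ((2 : ℝ) • e i))
    (h₇ : ∀ i j : Fin (ns + nd), i ≠ j → i < ns → j < ns → P ((2 : ℝ) • e i + e j)) :
    ∀ y ∈ singlesGenerators ns nd, P y := by
  rintro y (((((((rfl | ⟨i, hi, rfl⟩) | ⟨j, hj, rfl⟩) | ⟨i, j, hij, hi, hj, rfl⟩) |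
    ⟨i, j, hi, hj, rfl⟩) | ⟨i, j, k, hij, hik, hjk, hi, hj, hk, rfl⟩) | ⟨i, hi, rfl⟩) |
    ⟨i, j, hij, hi, hj, rfl⟩)
  exacts [h₀, h₁ i hi, h₂ j hj, h₃ i j hij hi hj, h₄ i j hi hj, h₅ i j k hij hik hjk hi hj hk,
    h₆ i hi, h₇ i j hij hi hj]

theorem zero_mem_extremePoints_singles :
    0 ∈ (convexHull ℝ (singlesGenerators ns nd)).extremePoints ℝ := by
  refine mem_extremePoints_convexHull_of_forall_lt (dotProductBilin ℝ ℝ fun _ ↦ -1)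
    (by simp [singlesGenerators]) ?_
  refine forall_mem_singlesGenerators ?_ ?_ ?_ ?_ ?_ ?_ ?_ ?_ <;> intros <;>
    simp only [map_zero, dotProductBilin_apply_apply, dotProduct_add, dotProduct_smul,
      dotProduct_ee, smul_eq_mul] <;>
    first | linarith | exact absurd rfl ‹_›

theorem ee_mem_extremePoints_singles {j : Fin (ns + nd)} (hj : ns ≤ j) :
    e j ∈ (convexHull ℝ (singlesGenerators ns nd)).extremePoints ℝ := by
  refine mem_extremePoints_convexHull_of_forall_lt
    (dotProductBilin ℝ ℝ fun k ↦ if k = j then 2 else -1)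
    (by unfold singlesGenerators S2; aesop) ?_
  refine forall_mem_singlesGenerators ?_ ?_ ?_ ?_ ?_ ?_ ?_ ?_ <;> intros <;>
    simp only [map_zero, dotProductBilin_apply_apply, dotProduct_add, dotProduct_smul,
      dotProduct_ee, smul_eq_mul] <;>
    split_ifs <;> subst_vars <;> first | linarith | omega | exact absurd rfl ‹_›

theorem ee_add_ee_mem_extremePoints_singles {i j : Fin (ns + nd)} (hi : i < ns) (hj : ns ≤ j) :
    e i + e j ∈ (convexHull ℝ (singlesGenerators ns nd)).extremePoints ℝ := by
  refine mem_extremePoints_convexHull_of_forall_lt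
    (dotProductBilin ℝ ℝ fun k ↦ if k = i then 1 else if k = j then 2 else -1)
    (by unfold singlesGenerators S4; aesop) ?_
  refine forall_mem_singlesGenerators ?_ ?_ ?_ ?_ ?_ ?_ ?_ ?_ <;> intros <;>
    simp only [map_zero, dotProductBilin_apply_apply, dotProduct_add, dotProduct_smul,
      dotProduct_ee, smul_eq_mul] <;>
    split_ifs <;> subst_vars <;> first | linarith | omega | exact absurd rfl ‹_›

theorem two_smul_ee_mem_extremePoints_singles {i : Fin (ns + nd)} (hi : i < ns) :
    (2 : ℝ) • e i ∈ (convexHull ℝ (singlesGenerators ns nd)).extremePoints ℝ := by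
  refine mem_extremePoints_convexHull_of_forall_lt
    (dotProductBilin ℝ ℝ fun k ↦ if k = i then 2 else -1)
    (by unfold singlesGenerators S6; aesop) ?_
  refine forall_mem_singlesGenerators ?_ ?_ ?_ ?_ ?_ ?_ ?_ ?_ <;> intros <;>
    simp only [map_zero, dotProductBilin_apply_apply, dotProduct_add, dotProduct_smul,
      dotProduct_ee, smul_eq_mul] <;>
    split_ifs <;> subst_vars <;> first | linarith | omega | exact absurd rfl ‹_›

theorem two_smul_ee_add_ee_mem_extremePoints_singles {i j : Fin (ns + nd)} (hij : i ≠ j)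
    (hi : i < ns) (hj : j < ns) :
    (2 : ℝ) • e i + e j ∈ (convexHull ℝ (singlesGenerators ns nd)).extremePoints ℝ := by
  refine mem_extremePoints_convexHull_of_forall_lt
    (dotProductBilin ℝ ℝ fun k ↦ if k = i then 2 else if k = j then 1 else -1)
    (by unfold singlesGenerators S7; aesop) ?_
  refine forall_mem_singlesGenerators ?_ ?_ ?_ ?_ ?_ ?_ ?_ ?_ <;> intros <;>
    simp only [map_zero, dotProductBilin_apply_apply, dotProduct_add, dotProduct_smul,
      dotProduct_ee, smul_eq_mul] <;>
    split_ifs <;> subst_vars <;> first | linarith | omega | exact absurd rfl ‹_›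

end

theorem singles_extreme_points_general (ns nd : ℕ) :
    ∀ x ∈ (({0} : Set (Fin (ns + nd) → ℝ)) ∪ S2 ns nd ∪ S4 ns nd ∪ S6 ns nd ∪ S7 ns nd),
      x ∈ Set.extremePoints ℝ (convexHull ℝ
        (({0} : Set (Fin (ns + nd) → ℝ)) ∪ S1 ns nd ∪ S2 ns nd ∪ S3 ns nd ∪ S4 ns nd ∪
          S5 ns nd ∪ S6 ns nd ∪ S7 ns nd)) := by
  rintro x ((((rfl | ⟨j, hj, rfl⟩) | ⟨i, j, hi, hj, rfl⟩) | ⟨i, hi, rfl⟩) |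
    ⟨i, j, hij, hi, hj, rfl⟩)
  exacts [zero_mem_extremePoints_singles, ee_mem_extremePoints_singles hj,
    ee_add_ee_mem_extremePoints_singles hi hj, two_smul_ee_mem_extremePoints_singles hi,
    two_smul_ee_add_ee_mem_extremePoints_singles hij hi hj]

/-- every point of {0} ∪ 𝒮₂ ∪ 𝒮₄ ∪ 𝒮₆ ∪ 𝒮₇ is an extreme point of
conv({0} ∪ 𝒮₁ ∪ ⋯ ∪ 𝒮₇). -/
theorem singles_extreme_points (ns nd : ℕ) (hns : 0 < ns) (hnd : 0 < nd) :
    ∀ x ∈ (({0} : Set (Fin (ns + nd) → ℝ)) ∪ S2 ns nd ∪ S4 ns nd ∪ S6 ns nd ∪ S7 ns nd),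
      x ∈ Set.extremePoints ℝ (convexHull ℝ
        (({0} : Set (Fin (ns + nd) → ℝ)) ∪ S1 ns nd ∪ S2 ns nd ∪ S3 ns nd ∪ S4 ns nd ∪
          S5 ns nd ∪ S6 ns nd ∪ S7 ns nd)) :=
  singles_extreme_points_general ns nd

end CCPoly
end

section
/- The extreme points of the convex hull of {0} ∪ 𝒟₁ ∪ 𝒟₂ ∪ ⋯ ∪ 𝒟₁₂ are exactly the points of {0} ∪ 𝒟₃ ∪ 𝒟₁₀ ∪ 𝒟₁₁ ∪ 𝒟₁₂: every point of {0} ∪ 𝒟₃ ∪ 𝒟₁₀ ∪ 𝒟₁₁ ∪ 𝒟₁₂ is an extreme point of conv({0} ∪ 𝒟₁ ∪ ⋯ ∪ 𝒟₁₂), and no other point of this convex hull is extreme. -/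
namespace CCPoly

noncomputable def dotL (n : ℕ) (c : Fin n → ℝ) : (Fin n → ℝ) →ₗ[ℝ] ℝ where
  toFun y := ∑ k, c k * y k
  map_add' u v := by simp [mul_add, Finset.sum_add_distrib]
  map_smul' r u := by simp [Finset.mul_sum, mul_left_comm]

@[simp] lemma dotL_ee (n : ℕ) (c : Fin n → ℝ) (i : Fin n) : dotL n c (ee n i) = c i := by
  simp [dotL, ee, Pi.single_apply]

lemma mem_extremePoints_of_linear {n : ℕ} (s : Set (Fin n → ℝ))
    (l : (Fin n → ℝ) →ₗ[ℝ] ℝ) (x : Fin n → ℝ) (hx : x ∈ s)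
    (hle : ∀ y ∈ s, l y ≤ l x) (huniq : ∀ y ∈ s, l y = l x → y = x) :
    x ∈ Set.extremePoints ℝ (convexHull ℝ s) := by
  have hhalf : convexHull ℝ s ⊆ {y | l y ≤ l x} :=
    convexHull_min hle (convex_halfSpace_le l.isLinear (l x))
  have key : ∀ y ∈ convexHull ℝ s, l y = l x → y = x := by
    intro y hy hly
    rw [convexHull_eq] at hy
    obtain ⟨ι, t, w, z, hw0, hw1, hz, hyc⟩ := hy
    rw [Finset.centerMass_eq_of_sum_1 _ _ hw1] at hyc
    have hly' : ∑ i ∈ t, w i * l (z i) = l x := by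
      rw [← hly, ← hyc]; simp [map_sum]
    have hzero : ∀ i ∈ t, w i * (l x - l (z i)) = 0 := by
      have hsum : ∑ i ∈ t, w i * (l x - l (z i)) = 0 := by
        have h1 : ∑ i ∈ t, w i * l x = l x := by
          rw [← Finset.sum_mul, hw1, one_mul]
        calc ∑ i ∈ t, w i * (l x - l (z i))
            = ∑ i ∈ t, w i * l x - ∑ i ∈ t, w i * l (z i) := by
              rw [← Finset.sum_sub_distrib]; congr 1; ext i; ring
          _ = 0 := by rw [h1, hly']; ring
      intro i hi
      have hnn : ∀ i ∈ t, 0 ≤ w i * (l x - l (z i)) := fun i hi =>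
        mul_nonneg (hw0 i hi) (sub_nonneg.2 (hle _ (hz i hi)))
      exact (Finset.sum_eq_zero_iff_of_nonneg hnn).1 hsum i hi
    have hyx : y = ∑ i ∈ t, w i • x := by
      rw [← hyc]
      refine Finset.sum_congr rfl fun i hi => ?_
      rcases eq_or_ne (w i) 0 with h0 | h0
      · simp [h0]
      · have hlz : l (z i) = l x := by
          have h2 := hzero i hi
          have h' : l x - l (z i) = 0 := by
            rcases mul_eq_zero.1 h2 with h | h
            · exact absurd h h0
            · exact h
          linarith
        rw [huniq _ (hz i hi) hlz]
    rw [hyx, ← Finset.sum_smul, hw1, one_smul]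
  refine ⟨subset_convexHull ℝ s hx, ?_⟩
  intro x₁ hx₁ x₂ hx₂ hseg
  obtain ⟨a, b, ha, hb, hab, hxe⟩ := hseg
  have h1 : l x₁ ≤ l x := hhalf hx₁
  have h2 : l x₂ ≤ l x := hhalf hx₂
  have hlx : a * l x₁ + b * l x₂ = l x := by
    rw [← hxe]; simp [map_add, map_smul]
  have hab' : a * l x + b * l x = l x := by rw [← add_mul, hab, one_mul]
  have e1 : l x₁ = l x := by
    by_contra hne
    have hlt : l x₁ < l x := lt_of_le_of_ne h1 hne
    nlinarith [mul_lt_mul_of_pos_left hlt ha, mul_le_mul_of_nonneg_left h2 hb.le]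
  have e2 : l x₂ = l x := by
    by_contra hne
    have hlt : l x₂ < l x := lt_of_le_of_ne h2 hne
    nlinarith [mul_lt_mul_of_pos_left hlt hb, mul_le_mul_of_nonneg_left h1 ha.le]
  exact key x₁ hx₁ e1

def SS (ns nd : ℕ) : Set (Fin (ns + nd) → ℝ) :=
  ({0} : Set (Fin (ns + nd) → ℝ)) ∪ D1 ns nd ∪ D2 ns nd ∪ D3 ns nd ∪ D4 ns nd ∪
    D5 ns nd ∪ D6 ns nd ∪ D7 ns nd ∪ D8 ns nd ∪ D9 ns nd ∪ D10 ns nd ∪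
    D11 ns nd ∪ D12 ns nd

lemma zero_sub' (ns nd : ℕ) : (0 : Fin (ns+nd) → ℝ) ∈ SS ns nd := by
  simp only [SS, Set.mem_union, Set.mem_singleton_iff]; tauto
lemma D1_sub (ns nd : ℕ) : D1 ns nd ⊆ SS ns nd := by
  intro z hz; simp only [SS, Set.mem_union]; tauto
lemma D3_sub (ns nd : ℕ) : D3 ns nd ⊆ SS ns nd := by
  intro z hz; simp only [SS, Set.mem_union]; tauto
lemma D10_sub (ns nd : ℕ) : D10 ns nd ⊆ SS ns nd := by
  intro z hz; simp only [SS, Set.mem_union]; tauto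
lemma D11_sub (ns nd : ℕ) : D11 ns nd ⊆ SS ns nd := by
  intro z hz; simp only [SS, Set.mem_union]; tauto
lemma D12_sub (ns nd : ℕ) : D12 ns nd ⊆ SS ns nd := by
  intro z hz; simp only [SS, Set.mem_union]; tauto

set_option maxHeartbeats 2000000 in
set_option linter.unreachableTactic false in
set_option linter.unusedTactic false in
lemma key0 (ns nd : ℕ)  :
    ∀ y ∈ SS ns nd,
      dotL (ns+nd) (fun _ : Fin (ns+nd) => (-1:ℝ)) y ≤ 0 ∧
      (dotL (ns+nd) (fun _ : Fin (ns+nd) => (-1:ℝ)) y = 0 → y = (0 : Fin (ns+nd) → ℝ)) := by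
  intro y hy
  simp only [SS, Set.mem_union, Set.mem_singleton_iff, D1, D2, D3, D4, D5, D6, D7, D8, D9,
    D10, D11, D12, Set.mem_setOf_eq] at hy
  rcases hy with (((((((((((rfl | ⟨a, ha, rfl⟩) | ⟨a, b, hab, ha, hb, rfl⟩) | ⟨a, ha, rfl⟩) |
    ⟨a, ha, rfl⟩) | ⟨a, b, hab, ha, hb, rfl⟩) | ⟨a, b, ha, hb, rfl⟩) |
    ⟨a, b, k, hab, ha, hb, hk, rfl⟩) | ⟨a, b, k, hab, hak, hbk, ha, hb, hk, rfl⟩) |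
    ⟨a, b, k, m, h1, h2, h3, h4, h5, h6, ha, hb, hk, hm, rfl⟩) | ⟨a, ha, rfl⟩) |
    ⟨a, b, ha, hb, rfl⟩) | ⟨a, b, hab, ha, hb, rfl⟩
  all_goals simp only [map_add, map_smul, map_zero, dotL_ee, smul_eq_mul]
  all_goals try simp only [Ne, Fin.ext_iff] at *
  all_goals refine ⟨?_, fun h => ?_⟩
  all_goals try (first | (split_ifs <;> first | (exfalso; omega) | norm_num) | norm_num)
  all_goals try (first
    | (exfalso; omega)
    | (split_ifs at h <;> first | (exfalso; omega) | (norm_num at h) | skip)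
    | (norm_num at h))
  all_goals rfl

set_option maxHeartbeats 2000000 in
set_option linter.unreachableTactic false in
set_option linter.unusedTactic false in
lemma key3 (ns nd : ℕ) (i : Fin (ns+nd)) (hi : ns ≤ (i:ℕ)) :
    ∀ y ∈ SS ns nd,
      dotL (ns+nd) (fun k => if (k:ℕ) = (i:ℕ) then (1:ℝ) else -1) y ≤ 2 ∧
      (dotL (ns+nd) (fun k => if (k:ℕ) = (i:ℕ) then (1:ℝ) else -1) y = 2 → y = (2:ℝ) • ee (ns+nd) i) := by
  intro y hy
  simp only [SS, Set.mem_union, Set.mem_singleton_iff, D1, D2, D3, D4, D5, D6, D7, D8, D9,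
    D10, D11, D12, Set.mem_setOf_eq] at hy
  rcases hy with (((((((((((rfl | ⟨a, ha, rfl⟩) | ⟨a, b, hab, ha, hb, rfl⟩) | ⟨a, ha, rfl⟩) |
    ⟨a, ha, rfl⟩) | ⟨a, b, hab, ha, hb, rfl⟩) | ⟨a, b, ha, hb, rfl⟩) |
    ⟨a, b, k, hab, ha, hb, hk, rfl⟩) | ⟨a, b, k, hab, hak, hbk, ha, hb, hk, rfl⟩) |
    ⟨a, b, k, m, h1, h2, h3, h4, h5, h6, ha, hb, hk, hm, rfl⟩) | ⟨a, ha, rfl⟩) |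
    ⟨a, b, ha, hb, rfl⟩) | ⟨a, b, hab, ha, hb, rfl⟩
  all_goals simp only [map_add, map_smul, map_zero, dotL_ee, smul_eq_mul]
  all_goals try simp only [Ne, Fin.ext_iff] at *
  all_goals refine ⟨?_, fun h => ?_⟩
  all_goals try (first | (split_ifs <;> first | (exfalso; omega) | norm_num) | norm_num)
  all_goals try (first
    | (exfalso; omega)
    | (split_ifs at h <;> first | (exfalso; omega) | (norm_num at h) | skip)
    | (norm_num at h))
  all_goals rw [show a = i from Fin.ext (by omega)]

set_option maxHeartbeats 2000000 in
set_option linter.unreachableTactic false in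
set_option linter.unusedTactic false in
lemma key10 (ns nd : ℕ) (i : Fin (ns+nd)) (hi : (i:ℕ) < ns) :
    ∀ y ∈ SS ns nd,
      dotL (ns+nd) (fun k => if (k:ℕ) = (i:ℕ) then (2:ℝ) else -1) y ≤ 4 ∧
      (dotL (ns+nd) (fun k => if (k:ℕ) = (i:ℕ) then (2:ℝ) else -1) y = 4 → y = (2:ℝ) • ee (ns+nd) i) := by
  intro y hy
  simp only [SS, Set.mem_union, Set.mem_singleton_iff, D1, D2, D3, D4, D5, D6, D7, D8, D9,
    D10, D11, D12, Set.mem_setOf_eq] at hy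
  rcases hy with (((((((((((rfl | ⟨a, ha, rfl⟩) | ⟨a, b, hab, ha, hb, rfl⟩) | ⟨a, ha, rfl⟩) |
    ⟨a, ha, rfl⟩) | ⟨a, b, hab, ha, hb, rfl⟩) | ⟨a, b, ha, hb, rfl⟩) |
    ⟨a, b, k, hab, ha, hb, hk, rfl⟩) | ⟨a, b, k, hab, hak, hbk, ha, hb, hk, rfl⟩) |
    ⟨a, b, k, m, h1, h2, h3, h4, h5, h6, ha, hb, hk, hm, rfl⟩) | ⟨a, ha, rfl⟩) |
    ⟨a, b, ha, hb, rfl⟩) | ⟨a, b, hab, ha, hb, rfl⟩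
  all_goals simp only [map_add, map_smul, map_zero, dotL_ee, smul_eq_mul]
  all_goals try simp only [Ne, Fin.ext_iff] at *
  all_goals refine ⟨?_, fun h => ?_⟩
  all_goals try (first | (split_ifs <;> first | (exfalso; omega) | norm_num) | norm_num)
  all_goals try (first
    | (exfalso; omega)
    | (split_ifs at h <;> first | (exfalso; omega) | (norm_num at h) | skip)
    | (norm_num at h))
  all_goals rw [show a = i from Fin.ext (by omega)]

set_option maxHeartbeats 2000000 in
set_option linter.unreachableTactic false in
set_option linter.unusedTactic false in
lemma key11 (ns nd : ℕ) (i j : Fin (ns+nd)) (hi : (i:ℕ) < ns) (hj : ns ≤ (j:ℕ)) :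
    ∀ y ∈ SS ns nd,
      dotL (ns+nd) (fun k => if (k:ℕ) = (i:ℕ) then (2:ℝ) else if (k:ℕ) = (j:ℕ) then 1 else -1) y ≤ 5 ∧
      (dotL (ns+nd) (fun k => if (k:ℕ) = (i:ℕ) then (2:ℝ) else if (k:ℕ) = (j:ℕ) then 1 else -1) y = 5 → y = (2:ℝ) • ee (ns+nd) i + ee (ns+nd) j) := by
  intro y hy
  simp only [SS, Set.mem_union, Set.mem_singleton_iff, D1, D2, D3, D4, D5, D6, D7, D8, D9,
    D10, D11, D12, Set.mem_setOf_eq] at hy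
  rcases hy with (((((((((((rfl | ⟨a, ha, rfl⟩) | ⟨a, b, hab, ha, hb, rfl⟩) | ⟨a, ha, rfl⟩) |
    ⟨a, ha, rfl⟩) | ⟨a, b, hab, ha, hb, rfl⟩) | ⟨a, b, ha, hb, rfl⟩) |
    ⟨a, b, k, hab, ha, hb, hk, rfl⟩) | ⟨a, b, k, hab, hak, hbk, ha, hb, hk, rfl⟩) |
    ⟨a, b, k, m, h1, h2, h3, h4, h5, h6, ha, hb, hk, hm, rfl⟩) | ⟨a, ha, rfl⟩) |
    ⟨a, b, ha, hb, rfl⟩) | ⟨a, b, hab, ha, hb, rfl⟩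
  all_goals simp only [map_add, map_smul, map_zero, dotL_ee, smul_eq_mul]
  all_goals try simp only [Ne, Fin.ext_iff] at *
  all_goals refine ⟨?_, fun h => ?_⟩
  all_goals try (first | (split_ifs <;> first | (exfalso; omega) | norm_num) | norm_num)
  all_goals try (first
    | (exfalso; omega)
    | (split_ifs at h <;> first | (exfalso; omega) | (norm_num at h) | skip)
    | (norm_num at h))
  all_goals rw [show a = i from Fin.ext (by omega), show b = j from Fin.ext (by omega)]

set_option maxHeartbeats 2000000 in
set_option linter.unreachableTactic false in
set_option linter.unusedTactic false in
lemma key12 (ns nd : ℕ) (i j : Fin (ns+nd)) (hij : i ≠ j) (hi : (i:ℕ) < ns) (hj : (j:ℕ) < ns) :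
    ∀ y ∈ SS ns nd,
      dotL (ns+nd) (fun k => if (k:ℕ) = (i:ℕ) then (1:ℝ) else if (k:ℕ) = (j:ℕ) then 1 else -1) y ≤ 4 ∧
      (dotL (ns+nd) (fun k => if (k:ℕ) = (i:ℕ) then (1:ℝ) else if (k:ℕ) = (j:ℕ) then 1 else -1) y = 4 → y = (2:ℝ) • ee (ns+nd) i + (2:ℝ) • ee (ns+nd) j) := by
  intro y hy
  simp only [SS, Set.mem_union, Set.mem_singleton_iff, D1, D2, D3, D4, D5, D6, D7, D8, D9,
    D10, D11, D12, Set.mem_setOf_eq] at hy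
  rcases hy with (((((((((((rfl | ⟨a, ha, rfl⟩) | ⟨a, b, hab, ha, hb, rfl⟩) | ⟨a, ha, rfl⟩) |
    ⟨a, ha, rfl⟩) | ⟨a, b, hab, ha, hb, rfl⟩) | ⟨a, b, ha, hb, rfl⟩) |
    ⟨a, b, k, hab, ha, hb, hk, rfl⟩) | ⟨a, b, k, hab, hak, hbk, ha, hb, hk, rfl⟩) |
    ⟨a, b, k, m, h1, h2, h3, h4, h5, h6, ha, hb, hk, hm, rfl⟩) | ⟨a, ha, rfl⟩) |
    ⟨a, b, ha, hb, rfl⟩) | ⟨a, b, hab, ha, hb, rfl⟩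
  all_goals simp only [map_add, map_smul, map_zero, dotL_ee, smul_eq_mul]
  all_goals try simp only [Ne, Fin.ext_iff] at *
  all_goals refine ⟨?_, fun h => ?_⟩
  all_goals try (first | (split_ifs <;> first | (exfalso; omega) | norm_num) | norm_num)
  all_goals try (first
    | (exfalso; omega)
    | (split_ifs at h <;> first | (exfalso; omega) | (norm_num at h) | skip)
    | (norm_num at h))
  all_goals first
    | rw [show a = i from Fin.ext (by omega), show b = j from Fin.ext (by omega)]
    | (rw [show a = j from Fin.ext (by omega), show b = i from Fin.ext (by omega)]; abel)

lemma good0 (ns nd : ℕ) :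
    (0 : Fin (ns+nd) → ℝ) ∈ Set.extremePoints ℝ (convexHull ℝ (SS ns nd)) := by
  have hv : dotL (ns+nd) (fun _ : Fin (ns+nd) => (-1:ℝ)) (0 : Fin (ns+nd) → ℝ) = 0 := by simp
  refine mem_extremePoints_of_linear _ (dotL (ns+nd) (fun _ : Fin (ns+nd) => (-1:ℝ))) _ (zero_sub' ns nd) (fun y hy => ?_) (fun y hy h => ?_)
  · rw [hv]; exact (key0 ns nd y hy).1
  · exact (key0 ns nd y hy).2 (by rw [← hv]; exact h)

lemma good3 (ns nd : ℕ) (i : Fin (ns+nd)) (hi : ns ≤ (i:ℕ)) :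
    (2:ℝ) • ee (ns+nd) i ∈ Set.extremePoints ℝ (convexHull ℝ (SS ns nd)) := by
  have hv : dotL (ns+nd) (fun k => if (k:ℕ) = (i:ℕ) then (1:ℝ) else -1)
      ((2:ℝ) • ee (ns+nd) i) = 2 := by simp
  refine mem_extremePoints_of_linear _ (dotL (ns+nd) (fun k => if (k:ℕ) = (i:ℕ) then (1:ℝ) else -1)) _ (D3_sub ns nd ⟨i, hi, rfl⟩)
    (fun y hy => ?_) (fun y hy h => ?_)
  · rw [hv]; exact (key3 ns nd i hi y hy).1
  · exact (key3 ns nd i hi y hy).2 (by rw [← hv]; exact h)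

lemma good10 (ns nd : ℕ) (i : Fin (ns+nd)) (hi : (i:ℕ) < ns) :
    (2:ℝ) • ee (ns+nd) i ∈ Set.extremePoints ℝ (convexHull ℝ (SS ns nd)) := by
  have hv : dotL (ns+nd) (fun k => if (k:ℕ) = (i:ℕ) then (2:ℝ) else -1)
      ((2:ℝ) • ee (ns+nd) i) = 4 := by simp; norm_num
  refine mem_extremePoints_of_linear _ (dotL (ns+nd) (fun k => if (k:ℕ) = (i:ℕ) then (2:ℝ) else -1)) _ (D10_sub ns nd ⟨i, hi, rfl⟩)
    (fun y hy => ?_) (fun y hy h => ?_)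
  · rw [hv]; exact (key10 ns nd i hi y hy).1
  · exact (key10 ns nd i hi y hy).2 (by rw [← hv]; exact h)

lemma good11 (ns nd : ℕ) (i j : Fin (ns+nd)) (hi : (i:ℕ) < ns) (hj : ns ≤ (j:ℕ)) :
    (2:ℝ) • ee (ns+nd) i + ee (ns+nd) j ∈
      Set.extremePoints ℝ (convexHull ℝ (SS ns nd)) := by
  have hij : (j:ℕ) ≠ (i:ℕ) := by omega
  have hv : dotL (ns+nd)
      (fun k => if (k:ℕ) = (i:ℕ) then (2:ℝ) else if (k:ℕ) = (j:ℕ) then 1 else -1)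
      ((2:ℝ) • ee (ns+nd) i + ee (ns+nd) j) = 5 := by
    simp [hij]; norm_num
  refine mem_extremePoints_of_linear _ (dotL (ns+nd) (fun k => if (k:ℕ) = (i:ℕ) then (2:ℝ) else if (k:ℕ) = (j:ℕ) then 1 else -1)) _ (D11_sub ns nd ⟨i, j, hi, hj, rfl⟩)
    (fun y hy => ?_) (fun y hy h => ?_)
  · rw [hv]; exact (key11 ns nd i j hi hj y hy).1
  · exact (key11 ns nd i j hi hj y hy).2 (by rw [← hv]; exact h)

lemma good12 (ns nd : ℕ) (i j : Fin (ns+nd)) (hij : i ≠ j) (hi : (i:ℕ) < ns)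
    (hj : (j:ℕ) < ns) :
    (2:ℝ) • ee (ns+nd) i + (2:ℝ) • ee (ns+nd) j ∈
      Set.extremePoints ℝ (convexHull ℝ (SS ns nd)) := by
  have hij' : (j:ℕ) ≠ (i:ℕ) := fun h => hij (Fin.ext h.symm)
  have hij'' : (i:ℕ) ≠ (j:ℕ) := fun h => hij (Fin.ext h)
  have hv : dotL (ns+nd)
      (fun k => if (k:ℕ) = (i:ℕ) then (1:ℝ) else if (k:ℕ) = (j:ℕ) then 1 else -1)
      ((2:ℝ) • ee (ns+nd) i + (2:ℝ) • ee (ns+nd) j) = 4 := by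
    simp [hij', hij'']; norm_num
  refine mem_extremePoints_of_linear _ (dotL (ns+nd) (fun k => if (k:ℕ) = (i:ℕ) then (1:ℝ) else if (k:ℕ) = (j:ℕ) then 1 else -1)) _ (D12_sub ns nd ⟨i, j, hij, hi, hj, rfl⟩)
    (fun y hy => ?_) (fun y hy h => ?_)
  · rw [hv]; exact (key12 ns nd i j hij hi hj y hy).1
  · exact (key12 ns nd i j hij hi hj y hy).2 (by rw [← hv]; exact h)

/-- the extreme points of conv({0} ∪ 𝒟₁ ∪ ⋯ ∪ 𝒟₁₂) are exactly the
points of {0} ∪ 𝒟₃ ∪ 𝒟₁₀ ∪ 𝒟₁₁ ∪ 𝒟₁₂. -/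
theorem doubles_extreme_points (ns nd : ℕ) (hns : 0 < ns) (hnd : 0 < nd) :
    Set.extremePoints ℝ (convexHull ℝ
        (({0} : Set (Fin (ns + nd) → ℝ)) ∪ D1 ns nd ∪ D2 ns nd ∪ D3 ns nd ∪ D4 ns nd ∪
          D5 ns nd ∪ D6 ns nd ∪ D7 ns nd ∪ D8 ns nd ∪ D9 ns nd ∪ D10 ns nd ∪
          D11 ns nd ∪ D12 ns nd)) =
      (({0} : Set (Fin (ns + nd) → ℝ)) ∪ D3 ns nd ∪ D10 ns nd ∪ D11 ns nd ∪ D12 ns nd) := by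
  show Set.extremePoints ℝ (convexHull ℝ (SS ns nd)) = _
  apply Set.Subset.antisymm
  · intro x hx
    have hxS : x ∈ SS ns nd := extremePoints_convexHull_subset hx
    have key : ∀ p q : Fin (ns+nd) → ℝ, p ∈ SS ns nd → q ∈ SS ns nd →
        x = (1/2:ℝ) • p + (1/2:ℝ) • q → p ≠ x → False := by
      intro p q hp hq hxe hne
      exact hne ((hx.2 (subset_convexHull ℝ _ hp) (subset_convexHull ℝ _ hq)
        ⟨1/2, 1/2, by norm_num, by norm_num, by norm_num, hxe.symm⟩))
    simp only [SS, Set.mem_union, Set.mem_singleton_iff, D1, D2, D3, D4, D5, D6, D7, D8, D9,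
      D10, D11, D12, Set.mem_setOf_eq] at hxS
    simp only [Set.mem_union, Set.mem_singleton_iff, D3, D10, D11, D12, Set.mem_setOf_eq]
    rcases hxS with (((((((((((rfl | ⟨a, ha, rfl⟩) | ⟨a, b, hab, ha, hb, rfl⟩) | ⟨a, ha, rfl⟩) |
      ⟨a, ha, rfl⟩) | ⟨a, b, hab, ha, hb, rfl⟩) | ⟨a, b, ha, hb, rfl⟩) |
      ⟨a, b, k, hab, ha, hb, hk, rfl⟩) | ⟨a, b, k, hab, hak, hbk, ha, hb, hk, rfl⟩) |
      ⟨a, b, k, m, h1, h2, h3, h4, h5, h6, ha, hb, hk, hm, rfl⟩) | ⟨a, ha, rfl⟩) |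
      ⟨a, b, ha, hb, rfl⟩) | ⟨a, b, hab, ha, hb, rfl⟩
    -- {0}
    · exact Or.inl (Or.inl (Or.inl (Or.inl rfl)))
    -- D1 : midpoint of 0 and 2e_a
    · exact (key 0 ((2:ℝ) • ee (ns+nd) a) (zero_sub' ns nd)
          (D3_sub ns nd ⟨a, ha, rfl⟩) (by module) (by
        intro hcon
        simpa [ee, Pi.single_apply] using congrFun hcon a)).elim
    -- D2 : midpoint of 2e_a and 2e_b
    · exact (key ((2:ℝ) • ee (ns+nd) a) ((2:ℝ) • ee (ns+nd) b)
          (D3_sub ns nd ⟨a, ha, rfl⟩) (D3_sub ns nd ⟨b, hb, rfl⟩) (by module) (by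
        intro hcon
        have hba : ¬ (b = a) := fun h => hab h.symm
        simpa [ee, Pi.single_apply, hba] using congrFun hcon b)).elim
    -- D3 : good
    · exact Or.inl (Or.inl (Or.inl (Or.inr ⟨a, ha, rfl⟩)))
    -- D4 : midpoint of 0 and 2e_a
    · exact (key 0 ((2:ℝ) • ee (ns+nd) a) (zero_sub' ns nd)
          (D10_sub ns nd ⟨a, ha, rfl⟩) (by module) (by
        intro hcon
        simpa [ee, Pi.single_apply] using congrFun hcon a)).elim
    -- D5 : midpoint of 2e_a and 2e_b
    · exact (key ((2:ℝ) • ee (ns+nd) a) ((2:ℝ) • ee (ns+nd) b)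
          (D10_sub ns nd ⟨a, ha, rfl⟩) (D10_sub ns nd ⟨b, hb, rfl⟩) (by module) (by
        intro hcon
        have hba : ¬ (b = a) := fun h => hab h.symm
        simpa [ee, Pi.single_apply, hba] using congrFun hcon b)).elim
    -- D6 : midpoint of e_b and 2e_a + e_b
    · exact (key (ee (ns+nd) b) ((2:ℝ) • ee (ns+nd) a + ee (ns+nd) b)
          (D1_sub ns nd ⟨b, hb, rfl⟩) (D11_sub ns nd ⟨a, b, ha, hb, rfl⟩)
          (by module) (by
        intro hcon
        have hab' : ¬ (a = b) := fun h => by rw [h] at ha; omega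
        simpa [ee, Pi.single_apply, hab'] using congrFun hcon a)).elim
    -- D7 : midpoint of 2e_a + e_k and 2e_b + e_k
    · exact (key ((2:ℝ) • ee (ns+nd) a + ee (ns+nd) k)
          ((2:ℝ) • ee (ns+nd) b + ee (ns+nd) k)
          (D11_sub ns nd ⟨a, k, ha, hk, rfl⟩) (D11_sub ns nd ⟨b, k, hb, hk, rfl⟩)
          (by module) (by
        intro hcon
        have hba : ¬ (b = a) := fun h => hab h.symm
        have hbk : ¬ (b = k) := fun h => by rw [h] at hb; omega
        simpa [ee, Pi.single_apply, hba, hbk] using congrFun hcon b)).elim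
    -- D8 : midpoint of 2e_a + 2e_b and 2e_k
    · exact (key ((2:ℝ) • ee (ns+nd) a + (2:ℝ) • ee (ns+nd) b)
          ((2:ℝ) • ee (ns+nd) k)
          (D12_sub ns nd ⟨a, b, hab, ha, hb, rfl⟩) (D10_sub ns nd ⟨k, hk, rfl⟩)
          (by module) (by
        intro hcon
        have hka : ¬ (k = a) := fun h => hak h.symm
        have hkb : ¬ (k = b) := fun h => hbk h.symm
        simpa [ee, Pi.single_apply, hka, hkb] using congrFun hcon k)).elim
    -- D9 : midpoint of 2e_a + 2e_b and 2e_k + 2e_m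
    · exact (key ((2:ℝ) • ee (ns+nd) a + (2:ℝ) • ee (ns+nd) b)
          ((2:ℝ) • ee (ns+nd) k + (2:ℝ) • ee (ns+nd) m)
          (D12_sub ns nd ⟨a, b, h1, ha, hb, rfl⟩) (D12_sub ns nd ⟨k, m, h6, hk, hm, rfl⟩)
          (by module) (by
        intro hcon
        have hka : ¬ (k = a) := fun h => h2 h.symm
        have hkb : ¬ (k = b) := fun h => h4 h.symm
        simpa [ee, Pi.single_apply, hka, hkb, h6] using congrFun hcon k)).elim
    -- D10 : good
    · exact Or.inl (Or.inl (Or.inr ⟨a, ha, rfl⟩))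
    -- D11 : good
    · exact Or.inl (Or.inr ⟨a, b, ha, hb, rfl⟩)
    -- D12 : good
    · exact Or.inr ⟨a, b, hab, ha, hb, rfl⟩
  · intro x hx
    simp only [Set.mem_union, Set.mem_singleton_iff, D3, D10, D11, D12,
      Set.mem_setOf_eq] at hx
    rcases hx with ((((rfl | ⟨i, hi, rfl⟩) | ⟨i, hi, rfl⟩) | ⟨i, j, hi, hj, rfl⟩) |
      ⟨i, j, hij, hi, hj, rfl⟩)
    · exact good0 ns nd
    · exact good3 ns nd i hi
    · exact good10 ns nd i hi
    · exact good11 ns nd i j hi hj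
    · exact good12 ns nd i j hij hi hj

end CCPoly
end
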